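/- arXiv:1709.07710 — 2 statements merged into one kernel-verified Lean document; each statement's English description precedes it below -/
import Mathlib

section
/- (Pointwise Peskun optimality of Metropolis–Hastings.) Let X be a set, π : X → (0,∞), q : X × X → (0,∞), and let a : X × X → [0,1] be any acceptance function satisfying the detailed balance condition π(θ)q(θ,φ)a(θ,φ) = π(φ)q(φ,θ)a(φ,θ) for all θ, φ ∈ X. Then for all θ, φ ∈ X, a(θ,φ) ≤ α_MH(θ,φ), where α_MH(θ,φ) = min(1, π(φ)q(φ,θ)/(π(θ)q(θ,φ))). -/
theorem le_div_of_mul_eq_mul_of_le_one {K : Type*} [Field K] [LinearOrder K]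
    [IsStrictOrderedRing K] {c d x y : K} (hc : 0 < c) (hd : 0 ≤ d) (hy : y ≤ 1)
    (h : c * x = d * y) : x ≤ d / c := by
  rw [le_div_iff₀ hc, mul_comm, h]
  exact mul_le_of_le_one_right hd hy

theorem mh_pointwise_optimal_general {X : Type*} (pd : X → ℝ) (q : X → X → ℝ)
    (hpd : ∀ θ, 0 < pd θ) (hq : ∀ θ φ, 0 < q θ φ)
    (a : X → X → ℝ) (ha1 : ∀ θ φ, a θ φ ≤ 1)
    (hdb : ∀ θ φ, pd θ * q θ φ * a θ φ = pd φ * q φ θ * a φ θ) :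
    ∀ θ φ : X, a θ φ ≤ min 1 (pd φ * q φ θ / (pd θ * q θ φ)) := fun θ φ =>
  le_min (ha1 θ φ) <| le_div_of_mul_eq_mul_of_le_one (mul_pos (hpd θ) (hq θ φ))
    (mul_pos (hpd φ) (hq φ θ)).le (ha1 φ θ) (hdb θ φ)

/-- Pointwise Peskun optimality of Metropolis–Hastings: any acceptance function `a`
with values in `[0,1]` satisfying detailed balance is dominated pointwise by the
Metropolis–Hastings acceptance probability. -/
theorem mh_pointwise_optimal {X : Type*} (pd : X → ℝ) (q : X → X → ℝ)
    (hpd : ∀ θ, 0 < pd θ) (hq : ∀ θ φ, 0 < q θ φ)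
    (a : X → X → ℝ) (ha0 : ∀ θ φ, 0 ≤ a θ φ) (ha1 : ∀ θ φ, a θ φ ≤ 1)
    (hdb : ∀ θ φ, pd θ * q θ φ * a θ φ = pd φ * q φ θ * a φ θ) :
    ∀ θ φ : X, a θ φ ≤ min 1 (pd φ * q φ θ / (pd θ * q θ φ)) :=
  mh_pointwise_optimal_general pd q hpd hq a ha1 hdb
end

section
/- Let θ₁, θ₂ > 0 with 1/2 < θ₁ < 3/2, set A = θ₁ − θ₂ and B = θ₁ + θ₂ − 1, and define α(u) = (A + B·cos u)/(2·sin u) for u ∈ (0,π). Then the function u ↦ α(u)² + α′(u) is not bounded below on (0,π), i.e. the set {α(u)² + α′(u) : u ∈ (0,π)} is not bounded below in ℝ. -/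
/-!
With `s = sin u`, `c = cos u`, the identity `s² + c² = 1` gives `α' = -(B + A c) / (2 s²)`, hence
`α² + α' = ((A + B c)² - 2 (B + A c)) / (4 s²)`. As `u → 0⁺` the numerator tends to
`(A + B)(A + B - 2) = (2θ₁ - 1)(2θ₁ - 3)`, which is negative for `1/2 < θ₁ < 3/2`, while the
denominator tends to `0⁺`; so `α² + α'` tends to `-∞` at `0⁺`.
-/

open Real Filter Set Topology

theorem Filter.Tendsto.not_bddBelow_image {α β : Type*} [Preorder β] [NoMinOrder β]
    {l : Filter α} [l.NeBot] {f : α → β} {s : Set α} (hf : Tendsto f l atBot) (hs : s ∈ l) :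
    ¬BddBelow (f '' s) := by
  rintro ⟨m, hm⟩
  obtain ⟨u, hu, hfu⟩ := ((show ∀ᶠ u in l, u ∈ s from hs).and (hf.eventually_lt_atBot m)).exists
  exact (hm ⟨u, hu, rfl⟩).not_gt hfu

theorem tendsto_div_sin_sq_atBot {g : ℝ → ℝ} (hg : ContinuousAt g 0) (hg0 : g 0 < 0) :
    Tendsto (fun u => g u / sin u ^ 2) (𝓝[>] 0) atBot := by
  have hsin_sq : Tendsto (fun u => sin u ^ 2) (𝓝[>] 0) (𝓝[>] 0) := by
    refine tendsto_nhdsWithin_iff.2 ⟨?_, ?_⟩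
    · exact ((by fun_prop : Continuous fun u => sin u ^ 2).tendsto' 0 0 (by simp)).mono_left
        nhdsWithin_le_nhds
    · filter_upwards [Ioo_mem_nhdsGT pi_pos] with u hu
      exact pow_pos (sin_pos_of_pos_of_lt_pi hu.1 hu.2) 2
  exact (hg.tendsto.mono_left nhdsWithin_le_nhds).neg_mul_atTop hg0
    (tendsto_inv_nhdsGT_zero.comp hsin_sq)

theorem hasDerivAt_div_two_sin (A B : ℝ) {u : ℝ} (hu : sin u ≠ 0) :
    HasDerivAt (fun u => (A + B * cos u) / (2 * sin u)) (-(B + A * cos u) / (2 * sin u ^ 2)) u := by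
  have hnum : HasDerivAt (fun u => A + B * cos u) (-(B * sin u)) u := by
    simpa [mul_comm] using ((hasDerivAt_cos u).const_mul B).const_add A
  refine (hnum.div ((hasDerivAt_sin u).const_mul 2) (mul_ne_zero two_ne_zero hu)).congr_deriv ?_
  field_simp
  linear_combination (-B) * sin_sq_add_cos_sq u

theorem div_two_sin_sq_add_deriv (A B : ℝ) {u : ℝ} (hu : sin u ≠ 0) :
    ((A + B * cos u) / (2 * sin u)) ^ 2 + -(B + A * cos u) / (2 * sin u ^ 2) =
      ((A + B * cos u) ^ 2 - 2 * (B + A * cos u)) / 4 / sin u ^ 2 := by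
  field_simp
  ring

theorem wf_drift_not_bddBelow_general (θ₁ θ₂ : ℝ)
    (h₁l : 1 / 2 < θ₁) (h₁u : θ₁ < 3 / 2)
    (A B : ℝ) (hA : A = θ₁ - θ₂) (hB : B = θ₁ + θ₂ - 1)
    (α : ℝ → ℝ) (hα : ∀ u, α u = (A + B * Real.cos u) / (2 * Real.sin u)) :
    ¬ BddBelow ((fun u : ℝ => α u ^ 2 + deriv α u) '' Set.Ioo 0 Real.pi) := by
  set g : ℝ → ℝ := fun u => ((A + B * cos u) ^ 2 - 2 * (B + A * cos u)) / 4
  have hg0 : g 0 < 0 := by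
    simp only [g, cos_zero, mul_one, hA, hB]
    nlinarith
  have hformula : ∀ u ∈ Ioo 0 π, g u / sin u ^ 2 = α u ^ 2 + deriv α u := by
    intro u hu
    have hsin : sin u ≠ 0 := (sin_pos_of_pos_of_lt_pi hu.1 hu.2).ne'
    rw [hα, funext hα, (hasDerivAt_div_two_sin A B hsin).deriv, div_two_sin_sq_add_deriv A B hsin]
  refine Tendsto.not_bddBelow_image ?_ (Ioo_mem_nhdsGT pi_pos)
  exact (tendsto_div_sin_sq_atBot (by fun_prop) hg0).congr'
    (eventuallyEq_of_mem (Ioo_mem_nhdsGT pi_pos) hformula)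

/-- For `1/2 < θ₁ < 3/2`, the function `α² + α'` associated with the
Lamperti-transformed Wright–Fisher drift is not bounded below on `(0,π)`. -/
theorem wf_drift_not_bddBelow (θ₁ θ₂ : ℝ) (h₁ : 0 < θ₁) (h₂ : 0 < θ₂)
    (h₁l : 1 / 2 < θ₁) (h₁u : θ₁ < 3 / 2)
    (A B : ℝ) (hA : A = θ₁ - θ₂) (hB : B = θ₁ + θ₂ - 1)
    (α : ℝ → ℝ) (hα : ∀ u, α u = (A + B * Real.cos u) / (2 * Real.sin u)) :
    ¬ BddBelow ((fun u : ℝ => α u ^ 2 + deriv α u) '' Set.Ioo 0 Real.pi) :=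
  wf_drift_not_bddBelow_general θ₁ θ₂ h₁l h₁u A B hA hB α hα
end
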